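/- arXiv:2504.08639 — 2 statements merged into one kernel-verified Lean document; each statement's English description precedes it below -/
import Mathlib

section
/- For any labelled Markov chain (X,L,τ,l) and all states x,y ∈ X, the behavioural distance satisfies bd(x,y) = sup_{i < ω} Γ^i(⊥)(x,y), where Γ^i(⊥) denotes the i-fold application of Γ to the constant-zero pseudometric ⊥. -/
/-- A finitely supported, rational-valued probability distribution on `X`. -/
structure FinDist (X : Type*) where
  p : X → ℝ
  nonneg : ∀ x, 0 ≤ p x
  rat : ∀ x, ∃ q : ℚ, (q : ℝ) = p x
  supp : Finset X
  mem_supp : ∀ x, x ∈ supp ↔ p x ≠ 0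
  sum_one : ∑ x ∈ supp, p x = 1

/-- A labelled Markov chain with states `X` and labels `L`. -/
structure LMC (X : Type*) (L : Type*) where
  τ : X → FinDist X
  label : X → L

/-- Expectation `μ ⊨ h = ∑ x, μ(x)·h(x)`. -/
noncomputable def expv {X : Type*} (μ : FinDist X) (h : X → ℝ) : ℝ :=
  ∑ z ∈ μ.supp, μ.p z * h z

/-- A `[0,1]`-valued pseudometric on `X`. -/
structure PMet (X : Type*) where
  d : X → X → ℝ
  nonneg : ∀ x y, 0 ≤ d x y
  le_one : ∀ x y, d x y ≤ 1
  refl : ∀ x, d x x = 0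
  symm : ∀ x y, d x y = d y x
  triangle : ∀ x y z, d x z ≤ d x y + d y z

open Classical in
/-- The functional `Γ` (on underlying distance functions). -/
noncomputable def GammaFun {X L : Type*} (M : LMC X L) (d : X → X → ℝ) : X → X → ℝ :=
  fun x y =>
    if M.label x ≠ M.label y then 1
    else sSup { r : ℝ | ∃ h : X → ℝ, (∀ z, h z ∈ Set.Icc (0:ℝ) 1) ∧
      (∀ u v, |h u - h v| ≤ d u v) ∧ r = expv (M.τ x) h - expv (M.τ y) h }

/-!
Kleene's fixed-point argument. `Γ` is monotone, so the iterates `Γⁱ(⊥)` increase and each lies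
below every fixed point; it remains to see that their pointwise supremum `D` is itself a fixed
point, i.e. that `Γ` preserves the supremum of this chain. Only the values of a `D`-nonexpansive
`h` on the finite supports of `τ(x)` and `τ(y)` matter for `τ(x) ⊨ h − τ(y) ⊨ h`, and on finitely
many pairs some iterate `Γᴺ(⊥)` is uniformly `ε`-close to `D`. The inf-convolution
`u ↦ min (min_s (h s + Γᴺ(⊥)(u, s))) 1` is then `Γᴺ(⊥)`-nonexpansive and within `ε` of `h` on
those supports, which gives `Γ(D) ≤ Γᴺ⁺¹(⊥) + ε ≤ D + ε`.
-/

open Filter Set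

section Expectation
variable {X : Type*} (μ : FinDist X)

lemma FinDist.supp_nonempty : μ.supp.Nonempty :=
  Finset.nonempty_of_sum_ne_zero (by rw [μ.sum_one]; exact one_ne_zero)

lemma expv_const (c : ℝ) : expv μ (fun _ => c) = c := by
  rw [expv, ← Finset.sum_mul, μ.sum_one, one_mul]

lemma expv_sub (h g : X → ℝ) : expv μ (fun z => h z - g z) = expv μ h - expv μ g := by
  simp only [expv, mul_sub, Finset.sum_sub_distrib]

lemma expv_mono_on_supp {h g : X → ℝ} (hle : ∀ z ∈ μ.supp, h z ≤ g z) :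
    expv μ h ≤ expv μ g :=
  Finset.sum_le_sum fun z hz => mul_le_mul_of_nonneg_left (hle z hz) (μ.nonneg z)

lemma expv_nonneg {h : X → ℝ} (hh : ∀ z, 0 ≤ h z) : 0 ≤ expv μ h :=
  (expv_const μ 0).symm.le.trans (expv_mono_on_supp μ fun z _ => hh z)

lemma expv_le_one {h : X → ℝ} (hh : ∀ z, h z ≤ 1) : expv μ h ≤ 1 :=
  (expv_mono_on_supp μ fun z _ => hh z).trans (expv_const μ 1).le

lemma expv_sub_expv_le_one (ν : FinDist X) {h : X → ℝ} (hh : ∀ z, h z ∈ Icc (0 : ℝ) 1) :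
    expv μ h - expv ν h ≤ 1 := by
  linarith [expv_le_one μ fun z => (hh z).2, expv_nonneg ν fun z => (hh z).1]

end Expectation

section Gamma
variable {X L : Type*} (M : LMC X L)

def gammaSet (d : X → X → ℝ) (x y : X) : Set ℝ :=
  { r : ℝ | ∃ h : X → ℝ, (∀ z, h z ∈ Icc (0 : ℝ) 1) ∧
      (∀ u v, |h u - h v| ≤ d u v) ∧ r = expv (M.τ x) h - expv (M.τ y) h }

variable {M}

lemma gammaFun_of_label_eq {d : X → X → ℝ} {x y : X} (hl : M.label x = M.label y) :
    GammaFun M d x y = sSup (gammaSet M d x y) := by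
  simp [GammaFun, hl, gammaSet]

lemma gammaFun_of_label_ne {d : X → X → ℝ} {x y : X} (hl : M.label x ≠ M.label y) :
    GammaFun M d x y = 1 := by
  simp [GammaFun, hl]

lemma le_gammaFun {d : X → X → ℝ} {x y : X} (hl : M.label x = M.label y) {h : X → ℝ}
    (hh : ∀ z, h z ∈ Icc (0 : ℝ) 1) (hd : ∀ u v, |h u - h v| ≤ d u v) :
    expv (M.τ x) h - expv (M.τ y) h ≤ GammaFun M d x y := by
  rw [gammaFun_of_label_eq hl]
  refine le_csSup ⟨1, ?_⟩ ⟨h, hh, hd, rfl⟩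
  rintro _ ⟨g, hg, -, rfl⟩
  exact expv_sub_expv_le_one _ _ hg

lemma gammaFun_le_of_label_eq {d : X → X → ℝ} {x y : X} (hl : M.label x = M.label y) {c : ℝ}
    (hc : 0 ≤ c) (H : ∀ h : X → ℝ, (∀ z, h z ∈ Icc (0 : ℝ) 1) → (∀ u v, |h u - h v| ≤ d u v) →
      expv (M.τ x) h - expv (M.τ y) h ≤ c) :
    GammaFun M d x y ≤ c := by
  rw [gammaFun_of_label_eq hl]
  refine Real.sSup_le ?_ hc
  rintro _ ⟨h, hh, hd, rfl⟩
  exact H h hh hd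

lemma gammaFun_nonneg {d : X → X → ℝ} (hd : ∀ u v, 0 ≤ d u v) (x y : X) :
    0 ≤ GammaFun M d x y := by
  by_cases hl : M.label x = M.label y
  · simpa [expv_const] using
      le_gammaFun (d := d) hl (h := fun _ => 0) (fun _ => ⟨le_rfl, zero_le_one⟩) (by simpa using hd)
  · rw [gammaFun_of_label_ne hl]
    exact zero_le_one

lemma gammaFun_le_one (d : X → X → ℝ) (x y : X) : GammaFun M d x y ≤ 1 := by
  by_cases hl : M.label x = M.label y
  · exact gammaFun_le_of_label_eq hl zero_le_one fun h hh _ => expv_sub_expv_le_one _ _ hh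
  · rw [gammaFun_of_label_ne hl]

lemma gammaFun_mono {d d' : X → X → ℝ} (hd : ∀ u v, 0 ≤ d u v) (hdd' : ∀ u v, d u v ≤ d' u v)
    (x y : X) : GammaFun M d x y ≤ GammaFun M d' x y := by
  by_cases hl : M.label x = M.label y
  · refine gammaFun_le_of_label_eq hl
      (gammaFun_nonneg (fun u v => (hd u v).trans (hdd' u v)) x y) fun h hh hhd => ?_
    exact le_gammaFun hl hh fun u v => (hhd u v).trans (hdd' u v)
  · rw [gammaFun_of_label_ne hl, gammaFun_of_label_ne hl]

lemma gammaFun_self {d : X → X → ℝ} (hd : ∀ u v, 0 ≤ d u v) (x : X) : GammaFun M d x x = 0 :=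
  le_antisymm (gammaFun_le_of_label_eq rfl le_rfl fun _ _ _ => (sub_self _).le)
    (gammaFun_nonneg hd x x)

lemma gammaSet_subset_swap (d : X → X → ℝ) (x y : X) : gammaSet M d x y ⊆ gammaSet M d y x := by
  rintro _ ⟨h, hh, hd, rfl⟩
  refine ⟨fun z => 1 - h z, fun z => ⟨sub_nonneg.2 (hh z).2, sub_le_self _ (hh z).1⟩,
    fun u v => ?_, ?_⟩
  · rw [sub_sub_sub_cancel_left, abs_sub_comm]
    exact hd u v
  · rw [expv_sub, expv_sub, expv_const, expv_const]
    ring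

lemma gammaFun_comm (d : X → X → ℝ) (x y : X) : GammaFun M d x y = GammaFun M d y x := by
  by_cases hl : M.label x = M.label y
  · rw [gammaFun_of_label_eq hl, gammaFun_of_label_eq hl.symm,
      (gammaSet_subset_swap d x y).antisymm (gammaSet_subset_swap d y x)]
  · rw [gammaFun_of_label_ne hl, gammaFun_of_label_ne (Ne.symm hl)]

lemma gammaFun_triangle {d : X → X → ℝ} (hd : ∀ u v, 0 ≤ d u v) (x y z : X) :
    GammaFun M d x z ≤ GammaFun M d x y + GammaFun M d y z := by
  have hxy := gammaFun_nonneg (M := M) hd x y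
  have hyz := gammaFun_nonneg (M := M) hd y z
  by_cases hl : M.label x = M.label y ∧ M.label y = M.label z
  · refine gammaFun_le_of_label_eq (hl.1.trans hl.2) (add_nonneg hxy hyz) fun h hh hhd => ?_
    linarith [le_gammaFun hl.1 hh hhd, le_gammaFun hl.2 hh hhd]
  · have := gammaFun_le_one (M := M) d x z
    rcases not_and_or.1 hl with hl | hl <;> rw [gammaFun_of_label_ne hl] <;> linarith

end Gamma

namespace PMet
variable {X : Type*}

def bot : PMet X where
  d _ _ := 0
  nonneg _ _ := le_rfl
  le_one _ _ := zero_le_one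
  refl _ := rfl
  symm _ _ := rfl
  triangle _ _ _ := (add_zero 0).ge

lemma bddAbove_range_d {ι : Type*} (d : ι → PMet X) (u v : X) :
    BddAbove (range fun i => (d i).d u v) :=
  ⟨1, forall_mem_range.2 fun i => (d i).le_one u v⟩

protected noncomputable def iSup {ι : Type*} [Nonempty ι] (d : ι → PMet X) : PMet X where
  d u v := ⨆ i, (d i).d u v
  nonneg u v := Real.iSup_nonneg fun i => (d i).nonneg u v
  le_one u v := ciSup_le fun i => (d i).le_one u v
  refl u := by simp only [PMet.refl, ciSup_const]
  symm u v := by simp only [PMet.symm (d _) u v]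
  triangle u v w := ciSup_le fun i => ((d i).triangle u v w).trans <|
    add_le_add (le_ciSup (bddAbove_range_d d u v) i) (le_ciSup (bddAbove_range_d d v w) i)

lemma le_iSup {ι : Type*} [Nonempty ι] (d : ι → PMet X) (i : ι) (u v : X) :
    (d i).d u v ≤ (PMet.iSup d).d u v :=
  le_ciSup (bddAbove_range_d d u v) i

lemma exists_iSup_le_add (d : ℕ → PMet X) (hd : Monotone fun i => (d i).d) (S : Finset X)
    {ε : ℝ} (hε : 0 < ε) : ∃ N, ∀ u ∈ S, ∀ v ∈ S, (PMet.iSup d).d u v ≤ (d N).d u v + ε := by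
  have hlim : ∀ u v, ∀ᶠ n in atTop, (PMet.iSup d).d u v - ε < (d n).d u v := fun u v =>
    (tendsto_atTop_ciSup (fun i j hij => hd hij u v) (bddAbove_range_d d u v)).eventually_const_lt
      (sub_lt_self _ hε)
  obtain ⟨N, hN⟩ := ((S.eventually_all).2 fun u _ => (S.eventually_all).2 fun v _ => hlim u v).exists
  exact ⟨N, fun u hu v hv => by linarith [hN u hu v hv]⟩

lemma exists_nonexpansive_approx (d : PMet X) {S : Finset X} (hS : S.Nonempty) {h : X → ℝ}
    {ε : ℝ} (hh : ∀ s ∈ S, h s ∈ Icc (0 : ℝ) 1) (hε : ∀ s ∈ S, ∀ t ∈ S, h s - h t ≤ d.d s t + ε) :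
    ∃ g : X → ℝ, (∀ z, g z ∈ Icc (0 : ℝ) 1) ∧ (∀ u v, |g u - g v| ≤ d.d u v) ∧
      ∀ s ∈ S, h s - ε ≤ g s ∧ g s ≤ h s := by
  set A : X → ℝ := fun u => S.inf' hS fun s => h s + d.d u s
  have hA : ∀ u v, A u ≤ A v + d.d u v := by
    intro u v
    obtain ⟨s, hs, hAv⟩ := S.exists_mem_eq_inf' hS fun s => h s + d.d v s
    calc A u ≤ h s + d.d u s := S.inf'_le _ hs
      _ ≤ h s + (d.d v s + d.d u v) := by linarith [d.triangle u v s, d.symm u v]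
      _ = A v + d.d u v := by simp only [A, hAv]; ring
  refine ⟨fun u => min (A u) 1, fun z => ⟨le_min ?_ zero_le_one, min_le_right _ _⟩,
    fun u v => ?_, fun s hs => ⟨?_, ?_⟩⟩
  · exact S.le_inf' hS _ fun s hs => add_nonneg (hh s hs).1 (d.nonneg z s)
  · calc |min (A u) 1 - min (A v) 1| ≤ |A u - A v| := by
          simpa using abs_min_sub_min_le_max (A u) 1 (A v) 1
      _ ≤ d.d u v := abs_sub_le_iff.2 ⟨by linarith [hA u v], by linarith [hA v u, d.symm u v]⟩
  · have hε0 : 0 ≤ ε := by linarith [hε s hs s hs, d.refl s]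
    exact le_min (S.le_inf' hS _ fun t ht => by linarith [hε s hs t ht]) (by linarith [(hh s hs).2])
  · exact (min_le_left _ _).trans ((S.inf'_le _ hs).trans (by rw [d.refl, add_zero]))

end PMet

section Kleene
variable {X L : Type*} (M : LMC X L)

noncomputable def gammaPMet (d : PMet X) : PMet X where
  d := GammaFun M d.d
  nonneg := gammaFun_nonneg d.nonneg
  le_one := gammaFun_le_one d.d
  refl := gammaFun_self d.nonneg
  symm := gammaFun_comm d.d
  triangle := gammaFun_triangle d.nonneg

noncomputable def gammaIter (n : ℕ) : PMet X := (gammaPMet M)^[n] PMet.bot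

lemma gammaIter_d (n : ℕ) : (gammaIter M n).d = (GammaFun M)^[n] (fun _ _ => 0) :=
  Function.Semiconj.iterate_right (f := PMet.d) (fun _ => rfl) n PMet.bot

lemma gammaIter_succ (n : ℕ) : gammaIter M (n + 1) = gammaPMet M (gammaIter M n) :=
  Function.iterate_succ_apply' _ _ _

lemma monotone_gammaIter : Monotone fun n => (gammaIter M n).d := by
  refine monotone_nat_of_le_succ fun n => ?_
  induction n with
  | zero => exact (gammaIter M 1).nonneg
  | succ n ih =>
    rw [gammaIter_succ M n] at ih
    rw [gammaIter_succ M (n + 1), gammaIter_succ M n]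
    exact gammaFun_mono (gammaIter M n).nonneg ih

lemma gammaIter_le_of_gammaFun_le (d : PMet X) (hd : ∀ u v, GammaFun M d.d u v ≤ d.d u v)
    (n : ℕ) (u v : X) : (gammaIter M n).d u v ≤ d.d u v := by
  induction n generalizing u v with
  | zero => exact d.nonneg u v
  | succ n ih =>
    rw [gammaIter_succ]
    exact (gammaFun_mono (gammaIter M n).nonneg ih u v).trans (hd u v)

theorem gammaFun_iSup_le (d : ℕ → PMet X) (hd : Monotone fun i => (d i).d) (x y : X) :
    GammaFun M (PMet.iSup d).d x y ≤ ⨆ i, GammaFun M (d i).d x y := by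
  classical
  have hbdd : BddAbove (range fun i => GammaFun M (d i).d x y) :=
    ⟨1, forall_mem_range.2 fun i => gammaFun_le_one _ x y⟩
  by_cases hl : M.label x = M.label y
  swap
  · rw [gammaFun_of_label_ne hl, ← gammaFun_of_label_ne (d := (d 0).d) hl]
    exact le_ciSup hbdd 0
  refine gammaFun_le_of_label_eq hl ((gammaFun_nonneg (d 0).nonneg x y).trans (le_ciSup hbdd 0))
    fun h hh hD => le_of_forall_pos_le_add fun ε hε => ?_
  set S := (M.τ x).supp ∪ (M.τ y).supp
  obtain ⟨N, hN⟩ := PMet.exists_iSup_le_add d hd S hε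
  obtain ⟨g, hg, hgd, hgh⟩ := (d N).exists_nonexpansive_approx
    ((M.τ x).supp_nonempty.mono Finset.subset_union_left) (fun s _ => hh s)
    fun s hs t ht => ((le_abs_self _).trans (hD s t)).trans (hN s hs t ht)
  have hx : expv (M.τ x) h - ε ≤ expv (M.τ x) g := by
    rw [← expv_const (M.τ x) ε, ← expv_sub]
    exact expv_mono_on_supp _ fun z hz => (hgh z (Finset.mem_union_left _ hz)).1
  have hy : expv (M.τ y) g ≤ expv (M.τ y) h :=
    expv_mono_on_supp _ fun z hz => (hgh z (Finset.mem_union_right _ hz)).2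
  linarith [le_gammaFun hl hg hgd, le_ciSup hbdd N]

lemma gammaFun_iSup_gammaIter (u v : X) :
    GammaFun M (PMet.iSup (gammaIter M)).d u v = (PMet.iSup (gammaIter M)).d u v := by
  refine le_antisymm ((gammaFun_iSup_le M _ (monotone_gammaIter M) u v).trans
    (ciSup_le fun i => ?_)) (ciSup_le fun i => ?_)
  · have := PMet.le_iSup (gammaIter M) (i + 1) u v
    rwa [gammaIter_succ] at this
  · cases i with
    | zero => exact gammaFun_nonneg (PMet.iSup (gammaIter M)).nonneg u v
    | succ n =>
      rw [gammaIter_succ]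
      exact gammaFun_mono (gammaIter M n).nonneg (PMet.le_iSup (gammaIter M) n) u v

end Kleene

theorem bd_eq_iSup_iterate_general {X L : Type*} (M : LMC X L) (bd : PMet X)
    (hfix : ∀ x y, GammaFun M bd.d x y = bd.d x y)
    (hleast : ∀ d : PMet X, (∀ x y, GammaFun M d.d x y = d.d x y) →
      ∀ x y, bd.d x y ≤ d.d x y)
    (x y : X) :
    bd.d x y = ⨆ i : ℕ, (GammaFun M)^[i] (fun _ _ => 0) x y := by
  simp_rw [← gammaIter_d]
  exact le_antisymm (hleast _ (gammaFun_iSup_gammaIter M) x y)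
    (ciSup_le fun i => gammaIter_le_of_gammaFun_le M bd (fun u v => (hfix u v).le) i x y)

/-- Kleene: `bd(x,y) = sup_i Γ^i(⊥)(x,y)`. -/
theorem bd_eq_iSup_iterate {X L : Type*} [Nonempty L] (M : LMC X L) (bd : PMet X)
    (hfix : ∀ x y, GammaFun M bd.d x y = bd.d x y)
    (hleast : ∀ d : PMet X, (∀ x y, GammaFun M d.d x y = d.d x y) →
      ∀ x y, bd.d x y ≤ d.d x y)
    (x y : X) :
    bd.d x y = ⨆ i : ℕ, (GammaFun M)^[i] (fun _ _ => 0) x y :=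
  bd_eq_iSup_iterate_general M bd hfix hleast x y
end

section
/- For any labelled Markov chain (X,L,τ,l), any formula φ of the logic L, and any states x,y ∈ X, the judgment x ⊢_ε y is derivable in the derivation system, where ε = |⟦φ⟧(x) − ⟦φ⟧(y)|. -/
/-- The derivation system for lower bounds on behavioural distances. -/
inductive Deriv {X L : Type*} [DecidableEq X] (M : LMC X L) : X → ℚ → X → Prop where
  | zero (x y : X) : Deriv M x 0 y
  | lab (x y : X) : M.label x ≠ M.label y → Deriv M x 1 y
  | symm {x y : X} {ε : ℚ} : Deriv M y ε x → Deriv M x ε y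
  | weak {x y : X} {ε ε' : ℚ} : Deriv M x ε' y → 0 ≤ ε → ε ≤ ε' → Deriv M x ε y
  | exp {x y : X} {ε : ℚ} (h : X → ℚ) :
      0 ≤ ε →
      (∀ z ∈ (M.τ x).supp ∪ (M.τ y).supp, 0 ≤ h z ∧ h z ≤ 1) →
      (∀ x' ∈ (M.τ x).supp ∪ (M.τ y).supp, ∀ y' ∈ (M.τ x).supp ∪ (M.τ y).supp,
        h y' < h x' → Deriv M x' (h x' - h y') y') →
      (ε : ℝ) ≤ expv (M.τ x) (fun z => ((h z : ℚ) : ℝ))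
              - expv (M.τ y) (fun z => ((h z : ℚ) : ℝ)) →
      Deriv M x ε y

/-- Formulas of the logic `𝓛`. -/
inductive Formula (L : Type*) where
  | atom : L → Formula L
  | next : Formula L → Formula L
  | neg : Formula L → Formula L
  | sub : Formula L → {q : ℚ // 0 ≤ q ∧ q ≤ 1} → Formula L
  | or : Formula L → Formula L → Formula L

/-- Quantitative semantics of the logic. -/
noncomputable def interp {X L : Type*} [DecidableEq L] (M : LMC X L) : Formula L → X → ℝ
  | .atom a, x => if M.label x = a then 1 else 0
  | .next φ, x => expv (M.τ x) (interp M φ)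
  | .neg φ, x => 1 - interp M φ x
  | .sub φ q, x => max 0 (interp M φ x - (q.1 : ℝ))
  | .or φ ψ, x => max (interp M φ x) (interp M ψ x)

/-! Induction on `φ`, for the stronger claim that every rational `0 ≤ q ≤ |⟦φ⟧ x - ⟦φ⟧ y|`
is derivable: this absorbs the weakening needed for `⊖` and `∨`, which are
non-expansive. For `○φ` the `exp` rule is applied with `h := ⟦φ⟧`, which is rational-valued
because `τ` is; its premises are then exactly the induction hypothesis. -/

open Set

namespace FinDist

variable {X : Type*} (μ : FinDist X) {f : X → ℝ}

lemma expv_mem_Icc (hf : ∀ z, f z ∈ Icc (0 : ℝ) 1) : expv μ f ∈ Icc (0 : ℝ) 1 := by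
  refine ⟨Finset.sum_nonneg fun z _ => mul_nonneg (μ.nonneg z) (hf z).1, ?_⟩
  calc expv μ f ≤ ∑ z ∈ μ.supp, μ.p z * 1 :=
        Finset.sum_le_sum fun z _ => mul_le_mul_of_nonneg_left (hf z).2 (μ.nonneg z)
    _ = 1 := by simp [μ.sum_one]

lemma exists_rat_eq_expv (hf : ∀ z, ∃ q : ℚ, (q : ℝ) = f z) :
    ∃ q : ℚ, (q : ℝ) = expv μ f := by
  choose g hg using hf
  choose p hp using μ.rat
  exact ⟨∑ z ∈ μ.supp, p z * g z, by push_cast [expv, hp, hg]; rfl⟩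

end FinDist

section Interp

variable {X L : Type*} [DecidableEq L] (M : LMC X L)

lemma interp_mem_Icc (φ : Formula L) (x : X) : interp M φ x ∈ Icc (0 : ℝ) 1 := by
  induction φ generalizing x with
  | atom a => unfold interp; split <;> norm_num
  | next φ ih => exact (M.τ x).expv_mem_Icc ih
  | neg φ ih => obtain ⟨h0, h1⟩ := ih x; exact ⟨by simp [interp, h1], by simp [interp, h0]⟩
  | sub φ q ih =>
    have hq : (0 : ℝ) ≤ q.1 := by exact_mod_cast q.2.1
    exact ⟨le_max_left _ _, max_le zero_le_one (by linarith [(ih x).2])⟩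
  | or φ ψ ih₁ ih₂ => exact ⟨le_max_of_le_left (ih₁ x).1, max_le (ih₁ x).2 (ih₂ x).2⟩

lemma exists_rat_eq_interp (φ : Formula L) (x : X) : ∃ q : ℚ, (q : ℝ) = interp M φ x := by
  induction φ generalizing x with
  | atom a => unfold interp; split; exacts [⟨1, by norm_num⟩, ⟨0, by norm_num⟩]
  | next φ ih => exact (M.τ x).exists_rat_eq_expv ih
  | neg φ ih => obtain ⟨q, hq⟩ := ih x; exact ⟨1 - q, by push_cast [interp, hq]; rfl⟩
  | sub φ c ih => obtain ⟨q, hq⟩ := ih x; exact ⟨max 0 (q - c.1), by push_cast [interp, hq]; rfl⟩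
  | or φ ψ ih₁ ih₂ =>
    obtain ⟨q₁, hq₁⟩ := ih₁ x
    obtain ⟨q₂, hq₂⟩ := ih₂ x
    exact ⟨max q₁ q₂, by push_cast [interp, hq₁, hq₂]; rfl⟩

end Interp

section Completeness

variable {X L : Type*} [DecidableEq X] [DecidableEq L] (M : LMC X L)

lemma deriv_of_le_sub_interp_next {φ : Formula L}
    (ih : ∀ x y (q : ℚ), 0 ≤ q → (q : ℝ) ≤ |interp M φ x - interp M φ y| → Deriv M x q y)
    {x y : X} {q : ℚ} (hq₀ : 0 ≤ q) (hq : (q : ℝ) ≤ interp M (.next φ) x - interp M (.next φ) y) :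
    Deriv M x q y := by
  choose h hh using exists_rat_eq_interp M φ
  refine Deriv.exp h hq₀ (fun z _ => ?_) (fun x' _ y' _ hlt => ?_) ?_
  · obtain ⟨h0, h1⟩ := interp_mem_Icc M φ z
    rw [← hh] at h0 h1
    exact ⟨by exact_mod_cast h0, by exact_mod_cast h1⟩
  · refine ih x' y' _ (sub_nonneg.2 hlt.le) ?_
    push_cast
    rw [hh, hh]
    exact le_abs_self _
  · simp only [hh]
    exact hq

theorem deriv_of_le_abs_sub_interp (φ : Formula L) (x y : X) (q : ℚ) (hq₀ : 0 ≤ q)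
    (hq : (q : ℝ) ≤ |interp M φ x - interp M φ y|) : Deriv M x q y := by
  induction φ generalizing x y q with
  | atom a =>
    by_cases hl : M.label x = M.label y
    · have hq' : (q : ℝ) ≤ 0 := by simpa [interp, hl] using hq
      exact (Deriv.zero x y).weak hq₀ (by exact_mod_cast hq')
    · have hq' : (q : ℝ) ≤ 1 := hq.trans <| abs_sub_le_of_nonneg_of_le
        (interp_mem_Icc M _ x).1 (interp_mem_Icc M _ x).2
        (interp_mem_Icc M _ y).1 (interp_mem_Icc M _ y).2
      exact (Deriv.lab x y hl).weak hq₀ (by exact_mod_cast hq')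
  | next φ ih =>
    rcases le_total (interp M (.next φ) y) (interp M (.next φ) x) with hle | hle
    · exact deriv_of_le_sub_interp_next M ih hq₀ (by rwa [abs_of_nonneg (sub_nonneg.2 hle)] at hq)
    · refine (deriv_of_le_sub_interp_next M ih hq₀ ?_).symm
      rwa [abs_sub_comm, abs_of_nonneg (sub_nonneg.2 hle)] at hq
  | neg φ ih =>
    refine ih x y q hq₀ ?_
    rwa [interp, interp, sub_sub_sub_cancel_left, abs_sub_comm] at hq
  | sub φ c ih =>
    refine ih x y q hq₀ (hq.trans ?_)
    simp only [interp, max_comm (0 : ℝ)]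
    simpa using abs_max_sub_max_le_abs (interp M φ x - c.1) (interp M φ y - c.1) 0
  | or φ ψ ih₁ ih₂ =>
    rcases le_max_iff.1 (hq.trans (abs_max_sub_max_le_max _ _ _ _)) with h | h
    exacts [ih₁ x y q hq₀ h, ih₂ x y q hq₀ h]

end Completeness

theorem formula_to_proof_general {X L : Type*} [DecidableEq X] [DecidableEq L]
    (M : LMC X L) (φ : Formula L) (x y : X) :
    ∃ ε : ℚ, (ε : ℝ) = |interp M φ x - interp M φ y| ∧ Deriv M x ε y := by
  obtain ⟨qx, hqx⟩ := exists_rat_eq_interp M φ x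
  obtain ⟨qy, hqy⟩ := exists_rat_eq_interp M φ y
  have hε : ((|qx - qy| : ℚ) : ℝ) = |interp M φ x - interp M φ y| := by push_cast [hqx, hqy]; rfl
  exact ⟨|qx - qy|, hε, deriv_of_le_abs_sub_interp M φ x y _ (abs_nonneg _) hε.le⟩

/-- For every formula `φ`, the difference of interpretations is a derivable
lower bound. -/
theorem formula_to_proof {X L : Type*} [DecidableEq X] [DecidableEq L] [Nonempty L]
    (M : LMC X L) (φ : Formula L) (x y : X) :
    ∃ ε : ℚ, (ε : ℝ) = |interp M φ x - interp M φ y| ∧ Deriv M x ε y :=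
  formula_to_proof_general M φ x y
end
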